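/- Let L be a list over a type α with decidable equality having no duplicate elements, and let S be a nonempty list of lists each of which is a prefix of L. Then sanitize (S.join) = L.take m, where m is the maximum of the lengths of the elements of S. (In the snap-and-chat ledger extraction under dynamic availability, the snapshots finalized by the BFT sub-protocol are all prefixes of the safe longest-chain ledger L, so flattening and sanitizing them yields exactly the longest finalized snapshot.) -/

import Mathlib

/-- `sanitize l` removes all but the first occurrence of each element of `l`,
preserving the original order, e.g. `sanitize [a,b,a,c,b] = [a,b,c]`. -/
def sanitize {α : Type*} [DecidableEq α] (l : List α) : List α :=
  l.foldl (fun acc a => if a ∈ acc then acc else acc ++ [a]) []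

private lemma foldl_mem {α : Type*} [DecidableEq α] :
    ∀ (l acc : List α), (∀ a ∈ l, a ∈ acc) →
      l.foldl (fun acc a => if a ∈ acc then acc else acc ++ [a]) acc = acc := by
  intro l
  induction l with
  | nil => intro acc _; rfl
  | cons a t ih =>
    intro acc h
    simp only [List.foldl_cons, if_pos (h a (by simp))]
    exact ih acc (fun b hb => h b (by simp [hb]))

private lemma foldl_seg {α : Type*} [DecidableEq α] (L : List α) (hL : L.Nodup) :
    ∀ (m j : ℕ), j + m ≤ L.length →
      ((L.drop j).take m).foldl (fun acc a => if a ∈ acc then acc else acc ++ [a])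
        (L.take j) = L.take (j + m) := by
  intro m
  induction m with
  | zero => intro j _; simp
  | succ m ih =>
    intro j hjm
    have hj : j < L.length := by omega
    have hdrop : L.drop j = L[j] :: L.drop (j + 1) := List.drop_eq_getElem_cons hj
    have htake : L.take (j + 1) = L.take j ++ [L[j]] := by
      rw [List.take_succ]; simp [List.getElem?_eq_getElem hj]
    have hnotmem : L[j] ∉ L.take j := by
      have hnd : (L.take (j + 1)).Nodup := hL.sublist (List.take_sublist _ _)
      rw [htake, List.nodup_append] at hnd
      intro hmem
      exact hnd.2.2 _ hmem _ (by simp) rfl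
    rw [hdrop]
    simp only [List.take_succ_cons, List.foldl_cons, if_neg hnotmem]
    rw [← htake]
    have := ih (j + 1) (by omega)
    rw [this]
    congr 1
    omega

private lemma foldl_prefix {α : Type*} [DecidableEq α] (L : List α) (hL : L.Nodup)
    (l : List α) (hl : l <+: L) (k : ℕ) (hk : k ≤ L.length) :
    l.foldl (fun acc a => if a ∈ acc then acc else acc ++ [a]) (L.take k)
      = L.take (max k l.length) := by
  have hleq : l = L.take l.length := List.prefix_iff_eq_take.mp hl
  have hlen : l.length ≤ L.length := hl.length_le
  rcases le_or_gt l.length k with h | h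
  · rw [max_eq_left h]
    apply foldl_mem
    intro a ha
    rw [hleq] at ha
    have heq : L.take l.length = (L.take k).take l.length := by
      rw [List.take_take, min_eq_left h]
    rw [heq] at ha
    exact List.mem_of_mem_take ha
  · rw [max_eq_right h.le]
    have hsplit : l = L.take k ++ (L.drop k).take (l.length - k) := by
      conv_lhs => rw [hleq]
      rw [← List.take_add]
      congr 1
      omega
    conv_lhs => rw [hsplit]
    rw [List.foldl_append, foldl_mem _ _ (fun a ha => ha),
      foldl_seg L hL (l.length - k) k (by omega)]
    congr 1
    omega

/-- If `L` has no duplicates and `S` is a nonempty list of prefixes of `L`, then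
flattening and sanitizing `S` yields exactly the longest snapshot, i.e. the prefix
of `L` of length the maximum of the lengths of the elements of `S`. -/
theorem sanitize_join_of_prefixes {α : Type*} [DecidableEq α] (L : List α)
    (hL : L.Nodup) (S : List (List α)) (hS : S ≠ [])
    (hpre : ∀ s ∈ S, s <+: L) :
    sanitize S.flatten = L.take ((S.map List.length).foldr max 0) := by
  unfold sanitize
  rw [List.foldl_flatten]
  suffices h : ∀ (S : List (List α)), (∀ s ∈ S, s <+: L) → ∀ k ≤ L.length,
      S.foldl (fun acc s =>
        s.foldl (fun acc a => if a ∈ acc then acc else acc ++ [a]) acc) (L.take k)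
        = L.take (max k ((S.map List.length).foldr max 0)) by
    have := h S hpre 0 (Nat.zero_le _)
    simpa using this
  intro S
  induction S with
  | nil => intro _ k _; simp
  | cons s t ih =>
    intro hpre' k hk
    simp only [List.foldl_cons, List.map_cons, List.foldr_cons]
    rw [foldl_prefix L hL s (hpre' s (by simp)) k hk]
    rw [ih (fun x hx => hpre' x (by simp [hx])) _
      (le_trans (max_le hk (hpre' s (by simp)).length_le) le_rfl)]
    congr 1
    rw [max_assoc]
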